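/- Let d be a positive integer and n an integer. If C_d(n), C_d(n−k), A(n+1), A(n), A(n+c), and A(n−d) all hold, then C_d(n+1) holds; that is, a_{n+2} + a_{n+1} > a_{n+c+1} + a_{n−d+1}. -/

import Mathlib

/-- `L` is an `S`-legal index set: all pairwise index differences avoid `S`. -/
def SlidLegal (S : Set ℕ) (L : Finset ℕ) : Prop :=
  ∀ i ∈ L, ∀ j ∈ L, ((i : ℤ) - (j : ℤ)).natAbs ∉ S

/-- `m` has an `S`-LID decomposition using the terms `a 1, …, a n`. -/
def SlidDecomp (S : Set ℕ) (a : ℕ → ℕ) (n m : ℕ) : Prop :=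
  ∃ L : Finset ℕ, L ⊆ Finset.Icc 1 n ∧ SlidLegal S L ∧ m = ∑ ℓ ∈ L, a ℓ

/-- `a` is the `S`-LID sequence (indexed from `1`; `a 0` is unconstrained):
for each `n ≥ 1`, `a n` is the least positive integer with no `S`-LID
decomposition using `a 1, …, a (n-1)`. -/
def IsSlidSeq (S : Set ℕ) (a : ℕ → ℕ) : Prop :=
  ∀ n, 1 ≤ n → IsLeast {m | 0 < m ∧ ¬ SlidDecomp S a (n - 1) m} (a n)

theorem slidDecomp_zero_iff {S : Set ℕ} {a : ℕ → ℕ} {m : ℕ} : SlidDecomp S a 0 m ↔ m = 0 := by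
  constructor
  · rintro ⟨L, hL, -, rfl⟩
    have hL : L = ∅ := Finset.subset_empty.mp (by simpa using hL)
    rw [hL, Finset.sum_empty]
  · rintro rfl
    exact ⟨∅, Finset.empty_subset _, by simp [SlidLegal], rfl⟩

namespace IsSlidSeq

variable {S : Set ℕ} {a : ℕ → ℕ}

theorem pos (ha : IsSlidSeq S a) {n : ℕ} (hn : 1 ≤ n) : 0 < a n :=
  (ha n hn).1.1

theorem apply_one (ha : IsSlidSeq S a) : a 1 = 1 := by
  refine (ha 1 le_rfl).unique ⟨⟨one_pos, ?_⟩, fun m hm => hm.1⟩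
  simp [slidDecomp_zero_iff]

end IsSlidSeq

theorem C_induction_general
    (S : Finset ℕ)
    (k : ℕ)
    (c : ℕ) (hc : 0 < c)
    (a : ℕ → ℕ) (ha : IsSlidSeq ↑S a)
    (d : ℕ) (n : ℕ)
    (hCn : a (n + c) + a (n - d) < a (n + 1) + a n)
    (hCnk : a (n - k + c) + a (n - k - d) < a (n - k + 1) + a (n - k))
    (hA1 : a (n + 2) = a (n + 1) + a (n + 1 - k))
    (hA0 : a (n + 1) = a n + a (n - k))
    (hAc : a (n + c + 1) = a (n + c) + a (n + c - k))
    (hAd : a (n - d + 1) = a (n - d) + a (n - d - k)) :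
    a (n + c + 1) + a (n - d + 1) < a (n + 2) + a (n + 1) := by
  rcases le_or_gt k n with hkn | hnk
  · -- Unfolding the four recurrences, the claim is the sum of `hCn` and `hCnk`.
    rw [show n + c - k = n - k + c by omega] at hAc
    rw [show n + 1 - k = n - k + 1 by omega] at hA1
    rw [show n - d - k = n - k - d by omega] at hAd
    omega
  · -- `n - k` truncates to `0`, so `hCnk` reads `a c < a 1 = 1`.
    simp only [Nat.sub_eq_zero_of_le hnk.le, zero_add, Nat.zero_sub] at hCnk
    have hac : a 1 ≤ a c := by
      rw [ha.apply_one]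
      exact ha.pos hc
    omega

theorem C_induction
    (S : Finset ℕ) (hne : S.Nonempty) (hpos : ∀ s ∈ S, 0 < s)
    (k : ℕ) (hk : k = S.max' hne)
    (c : ℕ) (hc : 0 < c)
    (hleast : IsLeast {m | 0 < m ∧ m ∉ (S : Set ℕ)} (k - c))
    (a : ℕ → ℕ) (ha : IsSlidSeq ↑S a)
    (d : ℕ) (hd : 0 < d) (n : ℕ)
    (hCn : a (n + c) + a (n - d) < a (n + 1) + a n)
    (hCnk : a (n - k + c) + a (n - k - d) < a (n - k + 1) + a (n - k))
    (hA1 : a (n + 2) = a (n + 1) + a (n + 1 - k))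
    (hA0 : a (n + 1) = a n + a (n - k))
    (hAc : a (n + c + 1) = a (n + c) + a (n + c - k))
    (hAd : a (n - d + 1) = a (n - d) + a (n - d - k)) :
    a (n + c + 1) + a (n - d + 1) < a (n + 2) + a (n + 1) :=
  C_induction_general S k c hc a ha d n hCn hCnk hA1 hA0 hAc hAd
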